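/- The rewriting system with rules ab→ba, cbad→1, cb²→1, a²d→1, cad→z, cbd→z, cd→1 (together with xz→z, zx→z for each letter) on alphabet {a,b,c,d,z} is terminating. -/
import Mathlib


inductive Letter | a | b | c | d | z
deriving DecidableEq

/-- The rewriting rules `ab→ba`, `cbad→1`, `cb²→1`, `a²d→1`, `cad→z`, `cbd→z`,
`cd→1`, together with `xz→z`, `zx→z` for every letter `x`. -/
def Rule : List Letter → List Letter → Prop := fun l r =>
  (l = [.a, .b] ∧ r = [.b, .a]) ∨
  (l = [.c, .b, .a, .d] ∧ r = []) ∨ (l = [.c, .b, .b] ∧ r = []) ∨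
  (l = [.a, .a, .d] ∧ r = []) ∨
  (l = [.c, .a, .d] ∧ r = [.z]) ∨ (l = [.c, .b, .d] ∧ r = [.z]) ∨
  (l = [.c, .d] ∧ r = []) ∨
  (∃ x : Letter, l = [x, .z] ∧ r = [.z]) ∨ (∃ x : Letter, l = [.z, x] ∧ r = [.z])

/-- One-step rewriting. -/
def Step (x y : List Letter) : Prop :=
  ∃ p s l r, Rule l r ∧ x = p ++ l ++ s ∧ y = p ++ r ++ s

/-- Number of inversions: pairs i < j with `a` at i and `b` at j. -/
def inv : List Letter → ℕ
  | [] => 0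
  | x :: t => (if x = Letter.a then t.count Letter.b else 0) + inv t

lemma inv_append (u v : List Letter) :
    inv (u ++ v) = inv u + u.count Letter.a * v.count Letter.b + inv v := by
  induction u with
  | nil => simp [inv]
  | cons x t ih =>
    cases x <;> simp [inv, ih, List.count_cons, List.count_append] <;> ring

/-- The rewriting system is terminating. -/
theorem stmt13 : WellFounded (fun y x : List Letter => Step x y) := by
  have hwf : WellFounded (Prod.Lex ((· < ·) : ℕ → ℕ → Prop) ((· < ·) : ℕ → ℕ → Prop)) :=
    (Nat.lt_wfRel.wf).prod_lex Nat.lt_wfRel.wf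
  refine Subrelation.wf ?_ (InvImage.wf (fun x : List Letter => (x.length, inv x)) hwf)
  rintro y x ⟨p, s, l, r, hr, hx, hy⟩
  subst hx hy
  show Prod.Lex _ _ _ _
  rw [Prod.lex_def]
  rcases hr with ⟨hl, hrr⟩ | ⟨hl, hrr⟩ | ⟨hl, hrr⟩ | ⟨hl, hrr⟩ | ⟨hl, hrr⟩ | ⟨hl, hrr⟩ |
    ⟨hl, hrr⟩ | ⟨w, hl, hrr⟩ | ⟨w, hl, hrr⟩ <;> subst hl hrr <;>
    simp [inv_append, inv, List.count_cons] <;> omega
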